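/- Consider the TSO game in which both players are permitted to update buffer messages both before and after their own moves. If a configuration c_0 is winning for a player, then that player has a winning strategy from c_0 under which after every one of her moves the reached configuration has all buffers empty; consequently, starting from the second configuration of any play consistent with such strategies of both players, the play only visits configurations in which the total buffer content has at most one message. -/

import Mathlib

namespace TSOGames

/-- The data of a (safety) game: a partition of the configurations into those of
player A (`isA`) and those of player B, a transition relation, and final configurations. -/
structure SGame (C : Type*) where
  isA : C → Prop
  step : C → C → Prop
  final : C → Prop

namespace SGame

variable {C : Type*} (G : SGame C)

/-- The transition relation alternates between the two players' configurations. -/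
def Alternating : Prop := ∀ c c', G.step c c' → (G.isA c ↔ ¬ G.isA c')

/-- Every configuration has at least one successor. -/
def DeadlockFree : Prop := ∀ c, ∃ c', G.step c c'

/-- Final configurations belong to player A. -/
def FinalInA : Prop := ∀ c, G.final c → G.isA c

/-- An (infinite) play: consecutive configurations are related by `step`. -/
def IsPlay (ρ : ℕ → C) : Prop := ∀ i, G.step (ρ i) (ρ (i + 1))

/-- A (history-dependent) strategy `σ`, given the strict history and the current
configuration, chooses a successor; it is valid for the player owning the
configurations satisfying `own` if it always chooses an actual successor. -/
def ValidStrat (own : C → Prop) (σ : List C → C → C) : Prop :=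
  ∀ h c, own c → G.step c (σ h c)

/-- A play is consistent with the strategy `σ` of the player owning the
configurations satisfying `own` if at every such configuration the play follows `σ`. -/
def Consistent (own : C → Prop) (σ : List C → C → C) (ρ : ℕ → C) : Prop :=
  ∀ i, own (ρ i) → ρ (i + 1) = σ (List.ofFn fun j : Fin i => ρ j) (ρ i)

/-- A play is winning for player B if it visits a final configuration. -/
def BWins (ρ : ℕ → C) : Prop := ∃ i, G.final (ρ i)

/-- A play is winning for player A if it never visits a final configuration. -/
def AWinsPlay (ρ : ℕ → C) : Prop := ¬ G.BWins ρ

/-- `σ` is a winning strategy from `c0` for the player owning the configurations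
satisfying `own`, whose plays are winning when they satisfy `winPlay`:
it is valid and every play from `c0` consistent with it is winning. -/
def WinningStrat (own : C → Prop) (winPlay : (ℕ → C) → Prop)
    (σ : List C → C → C) (c0 : C) : Prop :=
  G.ValidStrat own σ ∧
    ∀ ρ : ℕ → C, ρ 0 = c0 → G.IsPlay ρ → Consistent own σ ρ → winPlay ρ

/-- The given player has a winning strategy from `c0`. -/
def Wins (own : C → Prop) (winPlay : (ℕ → C) → Prop) (c0 : C) : Prop :=
  ∃ σ, G.WinningStrat own winPlay σ c0

/-- `c0` is winning for player A. -/
def WinA (c0 : C) : Prop := G.Wins (fun c => G.isA c) G.AWinsPlay c0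

/-- `c0` is winning for player B. -/
def WinB (c0 : C) : Prop := G.Wins (fun c => ¬ G.isA c) G.BWins c0

end SGame

/-- Restriction of a game to a subset `D` of its configurations. -/
def restrictGame {C : Type*} (G : SGame C) (D : Set C) : SGame C where
  isA := G.isA
  step := fun c c' => G.step c c' ∧ c ∈ D ∧ c' ∈ D
  final := fun c => G.final c ∧ c ∈ D

/-- The winning condition on plays for the player encoded by `b` (`true` = player A,
who wins a play iff it avoids the final configurations; `false` = player B). -/
def winPlayOf {C : Type*} (G : SGame C) (b : Bool) : (ℕ → C) → Prop :=
  fun ρ => if b then ¬ G.BWins ρ else G.BWins ρ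

end TSOGames
namespace TSOGames

/-- TSO instructions: read, write, skip, and memory fence. -/
inductive Instr (X V : Type*) : Type _
  | read (x : X) (v : V)
  | write (x : X) (v : V)
  | skip
  | fence

/-- Whether an instruction is a read instruction. -/
def Instr.isRead {X V : Type*} : Instr X V → Bool
  | .read _ _ => true
  | _ => false

/-- A concurrent program: a family of processes indexed by `I`, each a transition
system over local states `S` labeled by instructions over variables `X` and values `V`. -/
structure Program (I S X V : Type*) where
  delta : I → S → Instr X V → S → Prop

/-- A TSO configuration: local states, per-process FIFO store buffers
(newest message at the head, oldest at the end), and the shared memory. -/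
structure Conf (I S X V : Type*) where
  st : I → S
  buf : I → List (X × V)
  mem : X → V

section TSO

variable {I S X V : Type*}

/-- The value of the most recent buffered write on `x`, if any
(the buffer stores the newest message first). -/
def bufVal [DecidableEq X] : List (X × V) → X → Option V
  | [], _ => none
  | (y, v) :: rest, x => if y = x then some v else bufVal rest x

/-- The value process `ι` reads from variable `x`: the most recent buffered write of
`ι` on `x` if there is one, and the memory value otherwise. -/
def readVal [DecidableEq X] (c : Conf I S X V) (ι : I) (x : X) : V :=
  (bufVal (c.buf ι) x).getD (c.mem x)

variable [DecidableEq I] [DecidableEq X]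

/-- Execution of one instruction by process `ι` under TSO semantics. -/
inductive InstrStep (P : Program I S X V) (ι : I) (instr : Instr X V) :
    Conf I S X V → Conf I S X V → Prop
  | read (c : Conf I S X V) (x : X) (v : V) (s' : S) :
      instr = Instr.read x v → P.delta ι (c.st ι) (Instr.read x v) s' →
      readVal c ι x = v →
      InstrStep P ι instr c ⟨Function.update c.st ι s', c.buf, c.mem⟩
  | write (c : Conf I S X V) (x : X) (v : V) (s' : S) :
      instr = Instr.write x v → P.delta ι (c.st ι) (Instr.write x v) s' →
      InstrStep P ι instr c
        ⟨Function.update c.st ι s', Function.update c.buf ι ((x, v) :: c.buf ι), c.mem⟩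
  | skip (c : Conf I S X V) (s' : S) :
      instr = Instr.skip → P.delta ι (c.st ι) Instr.skip s' →
      InstrStep P ι instr c ⟨Function.update c.st ι s', c.buf, c.mem⟩
  | fence (c : Conf I S X V) (s' : S) :
      instr = Instr.fence → P.delta ι (c.st ι) Instr.fence s' → c.buf ι = [] →
      InstrStep P ι instr c ⟨Function.update c.st ι s', c.buf, c.mem⟩

/-- An update step: the oldest buffered message of some process is committed to memory. -/
inductive UpdStep : Conf I S X V → Conf I S X V → Prop
  | mk (c : Conf I S X V) (ι : I) (x : X) (v : V) (w : List (X × V)) :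
      c.buf ι = w ++ [(x, v)] →
      UpdStep c ⟨c.st, Function.update c.buf ι w, Function.update c.mem x v⟩

/-- Finitely many update steps. -/
def Upds : Conf I S X V → Conf I S X V → Prop := Relation.ReflTransGen UpdStep

/-- `flush` maps every configuration `c` to the configuration `c̄` obtained by
updating all buffered messages to the memory: `c →up* c̄` and all buffers of `c̄` are empty. -/
def IsFlush (flush : Conf I S X V → Conf I S X V) : Prop :=
  ∀ c, Upds c (flush c) ∧ ∀ ι, (flush c).buf ι = []

/-- Update steps by a player, if she is allowed to perform them (otherwise nothing happens). -/
def OptUpds (allowed : Bool) (c c' : Conf I S X V) : Prop :=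
  if allowed then Upds c c' else c' = c

/-- A move of a player whose permissions to update before resp. after her move are
given by `perm`: optional updates before, one instruction, optional updates after. -/
def Move (P : Program I S X V) (perm : Bool × Bool) (c c' : Conf I S X V) : Prop :=
  ∃ c1 c2, OptUpds perm.1 c c1 ∧ (∃ ι instr, InstrStep P ι instr c1 c2) ∧
    OptUpds perm.2 c2 c'

/-- The TSO game induced by a program `P`, update permissions
`permA`/`permB` = (may update before her move, may update after her move)
for players A and B, and a set `SF` of final local states. Game configurations are
TSO configurations annotated by `true` (player A's) or `false` (player B's). -/
def tsoGame (P : Program I S X V) (permA permB : Bool × Bool) (SF : Set S) :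
    SGame (Conf I S X V × Bool) where
  isA := fun c => c.2 = true
  step := fun c c' =>
    (c.2 = true ∧ c'.2 = false ∧ Move P permA c.1 c'.1) ∨
    (c.2 = false ∧ c'.2 = true ∧ Move P permB c.1 c'.1)
  final := fun c => c.2 = true ∧ ∃ ι, c.1.st ι ∈ SF

/-- The configurations owned by the player encoded by `b` (`true` = player A). -/
def ownOf (b : Bool) : Conf I S X V × Bool → Prop := fun c => c.2 = b

/-- The total number of buffered messages of a configuration. -/
def totalBuf [Fintype I] (c : Conf I S X V) : ℕ := ∑ ι, (c.buf ι).length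

end TSO

end TSOGames

/-!
A player who may update after her move can always finish it by flushing all buffers, and an
opponent who may update before her move can make from a configuration every move she could make
from a configuration reachable from it by updates. So a winning strategy `σ` stays winning when
each of its moves is followed by a flush: the player keeps track of the play of `σ` in which her
own configurations are the real ones and the opponent's are the unflushed ones. Every real
opponent move is legal in that simulated play, and updates do not change local states, so the
real play is final exactly where the simulated one is. Once both players flush after their moves,
every configuration after the first has empty buffers.
-/

namespace TSOGames

namespace SGame

variable {C : Type*} (own : C → Prop) (σ : List C → C → C)

open Classical in
/-- The play of `σ` simulated along a play `ρ` of `simStrat`: the opponent's moves are copied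
from `ρ`, while at the player's own configurations `σ` is replayed on the simulated history. -/
noncomputable def simPlay (ρ : ℕ → C) : ℕ → C
  | 0 => ρ 0
  | i + 1 =>
      if own (ρ i) then σ (List.ofFn fun j : Fin i => simPlay ρ j) (ρ i) else ρ (i + 1)
  decreasing_by exact Nat.lt_succ_of_lt j.isLt

variable {own σ}

theorem simPlay_zero (ρ : ℕ → C) : simPlay own σ ρ 0 = ρ 0 := by
  rw [simPlay]

theorem simPlay_succ_of_own {ρ : ℕ → C} {i : ℕ} (h : own (ρ i)) :
    simPlay own σ ρ (i + 1) = σ (List.ofFn fun j : Fin i => simPlay own σ ρ j) (ρ i) := by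
  rw [simPlay, if_pos h]

theorem simPlay_succ_of_not_own {ρ : ℕ → C} {i : ℕ} (h : ¬ own (ρ i)) :
    simPlay own σ ρ (i + 1) = ρ (i + 1) := by
  rw [simPlay, if_neg h]

theorem simPlay_congr {ρ ρ' : ℕ → C} {n : ℕ} (h : ∀ k ≤ n, ρ k = ρ' k) :
    simPlay own σ ρ n = simPlay own σ ρ' n := by
  induction n using Nat.strong_induction_on with
  | _ n ih =>
    cases n with
    | zero => simp only [simPlay_zero, h 0 le_rfl]
    | succ i =>
      have hsim : (List.ofFn fun j : Fin i => simPlay own σ ρ j) =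
          List.ofFn fun j : Fin i => simPlay own σ ρ' j :=
        List.ofFn_inj.mpr <| funext fun j =>
          ih j (by omega) fun k hk => h k (by omega)
      rw [simPlay, simPlay, hsim, h i (by omega), h (i + 1) le_rfl]

variable (own σ)

-- The history `h` followed by the current configuration `c` is read as a play.
noncomputable def simHist (h : List C) (c : C) : List C :=
  List.ofFn fun j : Fin h.length => simPlay own σ (fun k => h.getD k c) j

theorem simHist_ofFn (ρ : ℕ → C) (i : ℕ) :
    simHist own σ (List.ofFn fun j : Fin i => ρ j) (ρ i) =
      List.ofFn fun j : Fin i => simPlay own σ ρ j := by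
  rw [simHist, List.ofFn_congr List.length_ofFn]
  refine List.ofFn_inj.mpr <| funext fun j => simPlay_congr fun k hk => ?_
  have hki : k < i := by simp only [Fin.val_cast] at hk; omega
  simp [List.getD_eq_getElem?_getD, hki]

noncomputable def simStrat (f : C → C) (h : List C) (c : C) : C := f (σ (simHist own σ h c) c)

variable {own σ} {G : SGame C} {f : C → C} {ρ : ℕ → C}

theorem simPlay_eq_of_own (hρ : G.IsPlay ρ) (halt : ∀ c d, G.step c d → (own c ↔ ¬ own d))
    {i : ℕ} (h : own (ρ i)) : simPlay own σ ρ i = ρ i := by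
  cases i with
  | zero => exact simPlay_zero ρ
  | succ i => exact simPlay_succ_of_not_own fun h' => (halt _ _ (hρ i)).mp h' h

theorem eq_or_eq_apply_simPlay (hρ : Consistent own (simStrat own σ f) ρ) (i : ℕ) :
    ρ i = simPlay own σ ρ i ∨ ρ i = f (simPlay own σ ρ i) := by
  cases i with
  | zero => exact .inl (simPlay_zero ρ).symm
  | succ i =>
    by_cases h : own (ρ i)
    · exact .inr (by rw [hρ i h, simPlay_succ_of_own h, simStrat, simHist_ofFn])
    · exact .inl (simPlay_succ_of_not_own h).symm

theorem WinningStrat.simStrat {winPlay : (ℕ → C) → Prop} {c0 : C}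
    (hσ : G.WinningStrat own winPlay σ c0)
    (halt : ∀ c d, G.step c d → (own c ↔ ¬ own d)) (hfown : ∀ c, own (f c) ↔ own c)
    (hmove : ∀ c d, own c → G.step c d → G.step c (f d))
    (hopp : ∀ c d, G.step (f c) d → G.step c d)
    (hwin : ∀ ρ ρ' : ℕ → C, (∀ i, ρ' i = ρ i ∨ ρ' i = f (ρ i)) → winPlay ρ → winPlay ρ') :
    G.WinningStrat own winPlay (simStrat own σ f) c0 := by
  obtain ⟨hval, hσwin⟩ := hσ
  refine ⟨fun h c hc => hmove c _ hc (hval _ c hc), fun ρ hρ0 hρ hcons => ?_⟩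
  have hsim := eq_or_eq_apply_simPlay hcons
  have hown : ∀ i, own (simPlay own σ ρ i) → own (ρ i) := fun i hi => by
    rcases hsim i with h | h <;> rw [h]
    exacts [hi, (hfown _).mpr hi]
  have hplay : G.IsPlay (simPlay own σ ρ) := fun i => by
    by_cases h : own (ρ i)
    · rw [simPlay_succ_of_own h, simPlay_eq_of_own hρ halt h]
      exact hval _ _ h
    · rw [simPlay_succ_of_not_own h]
      rcases hsim i with h' | h'
      · exact h' ▸ hρ i
      · exact hopp _ _ (h' ▸ hρ i)
  have hcons' : Consistent own σ (simPlay own σ ρ) := fun i hi => by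
    have h := hown i hi
    rw [simPlay_succ_of_own h, simPlay_eq_of_own hρ halt h]
  exact hwin _ ρ hsim (hσwin _ (by rw [simPlay_zero, hρ0]) hplay hcons')

theorem Consistent.apply_succ {own own' : C → Prop} {σ' : List C → C → C} {Q : C → Prop}
    (hρ : Consistent own σ ρ) (hρ' : Consistent own' σ' ρ) (hcover : ∀ c, own c ∨ own' c)
    (hσ : ∀ h c, own c → Q (σ h c)) (hσ' : ∀ h c, own' c → Q (σ' h c)) (i : ℕ) :
    Q (ρ (i + 1)) := by
  rcases hcover (ρ i) with h | h
  · rw [hρ i h]; exact hσ _ _ h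
  · rw [hρ' i h]; exact hσ' _ _ h

end SGame

theorem winPlayOf_congr {C : Type*} {G : SGame C} (p : Bool) {ρ ρ' : ℕ → C}
    (h : ∀ i, G.final (ρ i) ↔ G.final (ρ' i)) : winPlayOf G p ρ ↔ winPlayOf G p ρ' := by
  simp only [winPlayOf, SGame.BWins, h]

section TSO

variable {I S X V : Type*} [DecidableEq I] [DecidableEq X]

theorem Upds.st_eq {c c' : Conf I S X V} (h : Upds c c') : c'.st = c.st := by
  induction h with
  | refl => rfl
  | tail _ hstep ih => cases hstep; exact ih

theorem Move.upds_right {P : Program I S X V} {b : Bool} {a c c' : Conf I S X V}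
    (h : Move P (b, true) a c) (h' : Upds c c') : Move P (b, true) a c' := by
  obtain ⟨c1, c2, h1, h2, h3⟩ := h
  exact ⟨c1, c2, h1, h2, Relation.ReflTransGen.trans h3 h'⟩

theorem Move.upds_left {P : Program I S X V} {b : Bool} {a a' c : Conf I S X V}
    (h : Upds a' a) (h' : Move P (true, b) a c) : Move P (true, b) a' c := by
  obtain ⟨c1, c2, h1, h2, h3⟩ := h'
  exact ⟨c1, c2, Relation.ReflTransGen.trans h h1, h2, h3⟩

theorem tsoGame_step_snd {P : Program I S X V} {permA permB : Bool × Bool} {SF : Set S}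
    {c d : Conf I S X V × Bool} (h : (tsoGame P permA permB SF).step c d) : d.2 = !c.2 := by
  rcases h with ⟨hc, hd, -⟩ | ⟨hc, hd, -⟩ <;> simp [hc, hd]

theorem ownOf_iff_not_of_tsoGame_step {P : Program I S X V} {permA permB : Bool × Bool}
    {SF : Set S} (p : Bool) {c d : Conf I S X V × Bool}
    (h : (tsoGame P permA permB SF).step c d) : ownOf p c ↔ ¬ ownOf p d := by
  simp only [ownOf, tsoGame_step_snd h]
  cases c.2 <;> cases p <;> decide

theorem tsoGame_winningStrat_simStrat_flush {P : Program I S X V} {SF : Set S}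
    {flush : Conf I S X V → Conf I S X V} (hflush : IsFlush flush) {p : Bool}
    {σ : List (Conf I S X V × Bool) → Conf I S X V × Bool → Conf I S X V × Bool}
    {c0 : Conf I S X V × Bool}
    (hσ : (tsoGame P (true, true) (true, true) SF).WinningStrat (ownOf p)
      (winPlayOf (tsoGame P (true, true) (true, true) SF) p) σ c0) :
    (tsoGame P (true, true) (true, true) SF).WinningStrat (ownOf p)
      (winPlayOf (tsoGame P (true, true) (true, true) SF) p)
      (SGame.simStrat (ownOf p) σ (Prod.map flush id)) c0 := by
  refine hσ.simStrat (fun _ _ => ownOf_iff_not_of_tsoGame_step p) (fun _ => Iff.rfl) ?_ ?_ ?_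
  · rintro c d - (⟨hc, hd, hm⟩ | ⟨hc, hd, hm⟩)
    exacts [.inl ⟨hc, hd, hm.upds_right (hflush _).1⟩, .inr ⟨hc, hd, hm.upds_right (hflush _).1⟩]
  · rintro c d (⟨hc, hd, hm⟩ | ⟨hc, hd, hm⟩)
    exacts [.inl ⟨hc, hd, hm.upds_left (hflush _).1⟩, .inr ⟨hc, hd, hm.upds_left (hflush _).1⟩]
  · refine fun ρ ρ' hρ => (winPlayOf_congr p fun i => ?_).mp
    rcases hρ i with h | h <;> rw [h]
    simp only [tsoGame, Prod.map_fst, Prod.map_snd, id, (hflush _).1.st_eq]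

variable [Fintype I]

theorem UpdStep.exists_totalBuf_lt {c : Conf I S X V} {ι : I} (h : c.buf ι ≠ []) :
    ∃ c', UpdStep c c' ∧ totalBuf c' < totalBuf c := by
  obtain ⟨w, ⟨x, v⟩, hw⟩ := (List.eq_nil_or_concat (c.buf ι)).resolve_left h
  rw [List.concat_eq_append] at hw
  refine ⟨_, UpdStep.mk c ι x v w hw,
    Finset.sum_lt_sum (fun j _ => ?_) ⟨ι, Finset.mem_univ ι, by simp [hw]⟩⟩
  rcases eq_or_ne j ι with rfl | hj
  · simp [hw]
  · simp [Function.update_of_ne hj]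

theorem exists_upds_buf_eq_nil (c : Conf I S X V) : ∃ c', Upds c c' ∧ ∀ ι, c'.buf ι = [] := by
  induction h : totalBuf c using Nat.strong_induction_on generalizing c with
  | _ n ih =>
    by_cases hc : ∀ ι, c.buf ι = []
    · exact ⟨c, .refl, hc⟩
    obtain ⟨ι, hι⟩ := not_forall.mp hc
    obtain ⟨c₁, hstep, hlt⟩ := UpdStep.exists_totalBuf_lt hι
    obtain ⟨c', hc', hbuf⟩ := ih _ (h ▸ hlt) c₁ rfl
    exact ⟨c', .head hstep hc', hbuf⟩

theorem exists_isFlush : ∃ flush : Conf I S X V → Conf I S X V, IsFlush flush :=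
  ⟨fun c => (exists_upds_buf_eq_nil c).choose, fun c => (exists_upds_buf_eq_nil c).choose_spec⟩

end TSO

/-- In the TSO game where both players may update before and after their own moves:
if `c0` is winning for a player, that player has a winning strategy from `c0` after
every one of whose moves all buffers are empty; consequently, in any play from `c0`
consistent with such strategies of both players, from the second configuration on the
total buffer content has at most one message. -/
theorem statement7 {I S X V : Type} [DecidableEq I] [DecidableEq X] [Fintype I]
    (P : Program I S X V) (SF : Set S)
    (G : SGame (Conf I S X V × Bool))
    (hG : G = tsoGame P (true, true) (true, true) SF)
    (c0 : Conf I S X V × Bool) :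
    (∀ p : Bool,
      G.Wins (ownOf p) (winPlayOf G p) c0 →
      ∃ σ : List (Conf I S X V × Bool) → Conf I S X V × Bool → Conf I S X V × Bool,
        G.WinningStrat (ownOf p) (winPlayOf G p) σ c0 ∧
        ∀ h c, ownOf p c → ∀ ι, (σ h c).1.buf ι = []) ∧
    (∀ σA σB : List (Conf I S X V × Bool) → Conf I S X V × Bool → Conf I S X V × Bool,
      G.ValidStrat (ownOf true) σA → G.ValidStrat (ownOf false) σB →
      (∀ h c, ownOf true c → ∀ ι, (σA h c).1.buf ι = []) →
      (∀ h c, ownOf false c → ∀ ι, (σB h c).1.buf ι = []) →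
      ∀ ρ : ℕ → Conf I S X V × Bool, ρ 0 = c0 → G.IsPlay ρ →
        SGame.Consistent (ownOf true) σA ρ → SGame.Consistent (ownOf false) σB ρ →
        ∀ i, 1 ≤ i → totalBuf (ρ i).1 ≤ 1) := by
  subst hG
  obtain ⟨flush, hflush⟩ := exists_isFlush (I := I) (S := S) (X := X) (V := V)
  refine ⟨fun p ⟨σ, hσ⟩ => ⟨_, tsoGame_winningStrat_simStrat_flush hflush hσ,
    fun _ _ _ => (hflush _).2⟩, ?_⟩
  intro σA σB _ _ hA hB ρ _ _ hρA hρB i hi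
  obtain ⟨j, rfl⟩ := Nat.exists_eq_add_of_le' hi
  have hempty := hρA.apply_succ (Q := fun c => ∀ ι, c.1.buf ι = []) hρB
    (fun c => Bool.eq_false_or_eq_true c.2) hA hB j
  simp [totalBuf, hempty]

end TSOGames
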